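/- arXiv:2411.16464 — 4 statements merged into one kernel-verified Lean document; each statement's English description precedes it below -/
import Mathlib

section
/- Let N ≥ 2, let E be the set of unordered pairs {i,j} of elements of {1,…,N}, let h : E → ℝ satisfy h_e < 0 for every edge e, and let s : {1,…,N} → ℝ satisfy sᵢ ≤ 0 for every i. Define the symmetric E×E matrix M by M_{ee} = h_e + sᵢ + sⱼ for e = {i,j}, M_{ef} = s_v if distinct edges e, f share exactly the vertex v, and M_{ef} = 0 if e and f are disjoint. Then for every x ∈ ℝ^E one has xᵀMx = Σ_{e∈E} h_e x_e² + Σ_{i=1}^N sᵢ (Σ_{e∋i} x_e)², and M is negative definite. -/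
/-- The index set of possible edges of the complete graph on `Fin N`:
unordered pairs, represented by ordered pairs (i,j) with i < j. -/
abbrev EdgeIdx (N : ℕ) := {p : Fin N × Fin N // p.1 < p.2}

/-! The matrix splits as `M = diag h + Bᵀ diag s B`, where `B` is the vertex–edge incidence
matrix of the complete graph: off the diagonal, `(Bᵀ diag s B) e f` sums `s v` over the common
vertices of `e` and `f`, of which distinct edges have at most one. Hence
`xᵀ M x = Σ h_e x_e² + Σ s_v (B x)_v²`, a sum of a negative definite and a negative
semidefinite form. -/

open Matrix Finset

section QuadraticForm

variable {m n R : Type*} [Fintype m] [Fintype n]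

theorem Matrix.dotProduct_mulVec_diagonal_add_transpose_mul_diagonal_mul [DecidableEq m]
    [DecidableEq n] [CommRing R]
    (d : n → R) (s : m → R) (B : Matrix m n R) (x : n → R) :
    x ⬝ᵥ (diagonal d + Bᵀ * diagonal s * B) *ᵥ x =
      ∑ e, d e * x e ^ 2 + ∑ v, s v * (B *ᵥ x) v ^ 2 := by
  rw [add_mulVec, dotProduct_add, ← mulVec_mulVec, ← mulVec_mulVec, dotProduct_mulVec x Bᵀ,
    vecMul_transpose]
  simp only [dotProduct, mulVec_diagonal]
  congr 1 <;> exact sum_congr rfl fun _ _ => by ring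

theorem sum_mul_sq_add_sum_mul_sq_neg {d : n → ℝ} {s : m → ℝ} (hd : ∀ e, d e < 0)
    (hs : ∀ v, s v ≤ 0) {x : n → ℝ} (hx : x ≠ 0) (y : m → ℝ) :
    ∑ e, d e * x e ^ 2 + ∑ v, s v * y v ^ 2 < 0 := by
  obtain ⟨e₀, he₀⟩ := Function.ne_iff.mp hx
  have hdiag : ∑ e, d e * x e ^ 2 < 0 :=
    sum_neg' (fun e _ => mul_nonpos_of_nonpos_of_nonneg (hd e).le (sq_nonneg _))
      ⟨e₀, mem_univ _, mul_neg_of_neg_of_pos (hd e₀) (pow_two_pos_of_ne_zero he₀)⟩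
  have hcross : ∑ v, s v * y v ^ 2 ≤ 0 :=
    sum_nonpos fun v _ => mul_nonpos_of_nonpos_of_nonneg (hs v) (sq_nonneg _)
  linarith

end QuadraticForm

namespace EdgeIdx

variable {N : ℕ}

def Incident (v : Fin N) (e : EdgeIdx N) : Prop := v = e.val.1 ∨ v = e.val.2

instance (v : Fin N) (e : EdgeIdx N) : Decidable (Incident v e) :=
  inferInstanceAs (Decidable (_ ∨ _))

theorem eq_of_incident_of_incident {e f : EdgeIdx N} {v w : Fin N} (hvw : v ≠ w)
    (hve : Incident v e) (hvf : Incident v f) (hwe : Incident w e) (hwf : Incident w f) :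
    e = f := by
  obtain ⟨⟨a, b⟩, hab : a < b⟩ := e
  obtain ⟨⟨c, d⟩, hcd : c < d⟩ := f
  simp only [Incident, Subtype.mk.injEq, Prod.mk.injEq, Fin.ext_iff, ne_eq] at *
  omega

def incMatrix (N : ℕ) : Matrix (Fin N) (EdgeIdx N) ℝ := fun v e => if Incident v e then 1 else 0

theorem incMatrix_transpose_mul_diagonal_mul_apply (s : Fin N → ℝ) (e f : EdgeIdx N) :
    ((incMatrix N)ᵀ * diagonal s * incMatrix N) e f =
      ∑ v ∈ univ.filter (fun v => Incident v e ∧ Incident v f), s v := by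
  rw [mul_apply, sum_filter]
  refine sum_congr rfl fun v _ => ?_
  simp only [mul_diagonal, transpose_apply, incMatrix]
  split_ifs <;> simp_all

theorem incMatrix_mulVec_apply (x : EdgeIdx N → ℝ) (v : Fin N) :
    (incMatrix N *ᵥ x) v = ∑ e, if Incident v e then x e else 0 := by
  simp only [mulVec, dotProduct, incMatrix, ite_mul, one_mul, zero_mul]

theorem eq_diagonal_add_incMatrix_transpose_mul_diagonal_mul {h : EdgeIdx N → ℝ}
    {s : Fin N → ℝ} {M : Matrix (EdgeIdx N) (EdgeIdx N) ℝ}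
    (hMdiag : ∀ e, M e e = h e + s e.val.1 + s e.val.2)
    (hMshare : ∀ e f, e ≠ f → ∀ v, Incident v e → Incident v f → M e f = s v)
    (hMdisj : ∀ e f, (∀ v, ¬(Incident v e ∧ Incident v f)) → M e f = 0) :
    M = diagonal h + (incMatrix N)ᵀ * diagonal s * incMatrix N := by
  ext e f
  rw [Matrix.add_apply, incMatrix_transpose_mul_diagonal_mul_apply]
  by_cases hef : e = f
  · subst hef
    have hboth : univ.filter (fun v => Incident v e ∧ Incident v e) = {e.val.1, e.val.2} := by
      ext v
      simp [Incident]
    rw [diagonal_apply_eq, hboth, sum_pair e.prop.ne, hMdiag, add_assoc]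
  rw [diagonal_apply_ne _ hef, zero_add]
  by_cases hshare : ∃ v, Incident v e ∧ Incident v f
  · obtain ⟨v, hve, hvf⟩ := hshare
    have hcommon : univ.filter (fun w => Incident w e ∧ Incident w f) = {v} := by
      refine eq_singleton_iff_unique_mem.mpr ⟨by simp [hve, hvf], fun w hw => ?_⟩
      obtain ⟨hwe, hwf⟩ := (mem_filter.mp hw).2
      by_contra hwv
      exact hef (eq_of_incident_of_incident hwv hwe hwf hve hvf)
    rw [hcommon, sum_singleton, hMshare e f hef v hve hvf]
  · rw [hMdisj e f fun v hv => hshare ⟨v, hv⟩, eq_comm]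
    exact sum_eq_zero fun v hv => (hshare ⟨v, (mem_filter.mp hv).2⟩).elim

end EdgeIdx

open Matrix in
theorem stmt_4_general (N : ℕ)
    (h : EdgeIdx N → ℝ) (hh : ∀ e, h e < 0)
    (s : Fin N → ℝ) (hs : ∀ i, s i ≤ 0)
    (M : Matrix (EdgeIdx N) (EdgeIdx N) ℝ)
    (hMdiag : ∀ e : EdgeIdx N, M e e = h e + s e.val.1 + s e.val.2)
    (hMshare : ∀ e f : EdgeIdx N, e ≠ f → ∀ v : Fin N,
      (v = e.val.1 ∨ v = e.val.2) → (v = f.val.1 ∨ v = f.val.2) → M e f = s v)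
    (hMdisj : ∀ e f : EdgeIdx N, (∀ v : Fin N,
      ¬((v = e.val.1 ∨ v = e.val.2) ∧ (v = f.val.1 ∨ v = f.val.2))) → M e f = 0)
    (x : EdgeIdx N → ℝ) :
    x ⬝ᵥ M.mulVec x =
      (∑ e : EdgeIdx N, h e * x e ^ 2) +
        ∑ i : Fin N, s i *
          (∑ e : EdgeIdx N, if i = e.val.1 ∨ i = e.val.2 then x e else 0) ^ 2 ∧
    (x ≠ 0 → x ⬝ᵥ M.mulVec x < 0) := by
  have hform :
      x ⬝ᵥ M *ᵥ x = ∑ e, h e * x e ^ 2 + ∑ v, s v * (EdgeIdx.incMatrix N *ᵥ x) v ^ 2 := by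
    rw [EdgeIdx.eq_diagonal_add_incMatrix_transpose_mul_diagonal_mul hMdiag hMshare hMdisj,
      dotProduct_mulVec_diagonal_add_transpose_mul_diagonal_mul]
  refine ⟨?_, fun hx => hform ▸ sum_mul_sq_add_sum_mul_sq_neg hh hs hx _⟩
  simp only [hform, EdgeIdx.incMatrix_mulVec_apply]
  rfl

open Matrix in
/-- Let N ≥ 2, E the set of unordered pairs of {1,…,N}, h : E → ℝ negative,
s : {1,…,N} → ℝ nonpositive. Define the symmetric E×E matrix M with
M_{ee} = h_e + sᵢ + sⱼ for e = {i,j}, M_{ef} = s_v if distinct e,f share the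
vertex v, and M_{ef} = 0 if disjoint. Then for every x ∈ ℝ^E,
xᵀMx = Σ_e h_e x_e² + Σ_i s_i (Σ_{e∋i} x_e)², and M is negative definite. -/
theorem stmt_4 (N : ℕ) (hN : 2 ≤ N)
    (h : EdgeIdx N → ℝ) (hh : ∀ e, h e < 0)
    (s : Fin N → ℝ) (hs : ∀ i, s i ≤ 0)
    (M : Matrix (EdgeIdx N) (EdgeIdx N) ℝ)
    (hMdiag : ∀ e : EdgeIdx N, M e e = h e + s e.val.1 + s e.val.2)
    (hMshare : ∀ e f : EdgeIdx N, e ≠ f → ∀ v : Fin N,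
      (v = e.val.1 ∨ v = e.val.2) → (v = f.val.1 ∨ v = f.val.2) → M e f = s v)
    (hMdisj : ∀ e f : EdgeIdx N, (∀ v : Fin N,
      ¬((v = e.val.1 ∨ v = e.val.2) ∧ (v = f.val.1 ∨ v = f.val.2))) → M e f = 0)
    (x : EdgeIdx N → ℝ) :
    x ⬝ᵥ M.mulVec x =
      (∑ e : EdgeIdx N, h e * x e ^ 2) +
        ∑ i : Fin N, s i *
          (∑ e : EdgeIdx N, if i = e.val.1 ∨ i = e.val.2 then x e else 0) ^ 2 ∧
    (x ≠ 0 → x ⬝ᵥ M.mulVec x < 0) :=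
  stmt_4_general N h hh s hs M hMdiag hMshare hMdisj x
end

section
/- For every n ≥ 1, all real parameters κ > 1, γ > 1, δ > 1, and every vector c ∈ (0,∞)ⁿ, the ALKY utility function U(α; c) = Σ_{j=1}^n (κ α_j c_j − α_j^γ / (1 − α_j^γ)) − (Σ_{j=1}^n α_j)^δ is strictly concave as a function of α on the convex set [0,1)ⁿ. -/
/-- The ALKY utility function with parameters κ, γ, δ and compatibility
vector c, as a function of the weight vector α. -/
noncomputable def ALKY (n : ℕ) (κ γ δ : ℝ) (c : Fin n → ℝ) (α : Fin n → ℝ) : ℝ :=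
  (∑ j, (κ * α j * c j - α j ^ γ / (1 - α j ^ γ))) - (∑ j, α j) ^ δ

/-!
The utility is a linear term, minus the barrier `∑ j, φ (α j ^ γ)` with `φ t = t / (1 - t)`,
minus the congestion term `(∑ j, α j) ^ δ`. Since `φ` is strictly convex and strictly increasing
on `t < 1` and `x ↦ x ^ γ` is strictly convex and injective on `[0, 1)`, each barrier summand is
strictly convex; two distinct points differ in some coordinate, so the barrier is strictly convex.
The congestion term is a convex function of a linear one, hence convex.
-/

open Set

theorem StrictConvexOn.sum_apply {𝕜 E β ι : Type*} [Fintype ι] [Semiring 𝕜] [PartialOrder 𝕜]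
    [AddCommMonoid E] [Module 𝕜 E] [AddCommMonoid β] [PartialOrder β]
    [IsOrderedCancelAddMonoid β] [Module 𝕜 β] {s : Set E} {f : E → β}
    (hf : StrictConvexOn 𝕜 s f) :
    StrictConvexOn 𝕜 {x : ι → E | ∀ i, x i ∈ s} fun x => ∑ i, f (x i) := by
  refine ⟨fun x hx y hy a b ha hb hab i => hf.1 (hx i) (hy i) ha hb hab, ?_⟩
  intro x hx y hy hxy a b ha hb hab
  obtain ⟨i₀, hi₀⟩ := Function.ne_iff.mp hxy
  calc ∑ i, f ((a • x + b • y) i)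
      < ∑ i, (a • f (x i) + b • f (y i)) :=
        Finset.sum_lt_sum (fun i _ => hf.convexOn.2 (hx i) (hy i) ha.le hb.le hab)
          ⟨i₀, Finset.mem_univ _, hf.2 (hx i₀) (hy i₀) hi₀ ha hb hab⟩
    _ = a • ∑ i, f (x i) + b • ∑ i, f (y i) := by
        rw [Finset.sum_add_distrib, Finset.smul_sum, Finset.smul_sum]

theorem ConvexOn.comp_sum_apply {ι : Type*} [Fintype ι] {s : Set ℝ} {g : ℝ → ℝ}
    (hg : ConvexOn ℝ s g) :
    ConvexOn ℝ {x : ι → ℝ | ∑ i, x i ∈ s} fun x => g (∑ i, x i) := by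
  have hcomp : (fun x : ι → ℝ => g (∑ i, x i))
      = g ∘ ⇑(∑ i, LinearMap.proj i : (ι → ℝ) →ₗ[ℝ] ℝ) := by
    funext x
    simp
  have hdom : {x : ι → ℝ | ∑ i, x i ∈ s}
      = ⇑(∑ i, LinearMap.proj i : (ι → ℝ) →ₗ[ℝ] ℝ) ⁻¹' s := by
    ext x
    simp
  exact hcomp ▸ hdom ▸ hg.comp_linearMap _

theorem strictConvexOn_div_one_sub :
    StrictConvexOn ℝ (Iio 1) fun t : ℝ => t / (1 - t) := by
  refine ⟨convex_Iio 1, ?_⟩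
  rintro u (hu : u < 1) v (hv : v < 1) huv a b ha hb hab
  obtain rfl : b = 1 - a := by linarith
  have hu' : 0 < 1 - u := by linarith
  have hv' : 0 < 1 - v := by linarith
  have hw : 0 < 1 - (a * u + (1 - a) * v) := by nlinarith
  rw [smul_eq_mul, smul_eq_mul, smul_eq_mul, smul_eq_mul,
    show a * (u / (1 - u)) + (1 - a) * (v / (1 - v))
      = (a * u * (1 - v) + (1 - a) * v * (1 - u)) / ((1 - u) * (1 - v)) by field_simp,
    div_lt_div_iff₀ hw (by positivity)]
  nlinarith [mul_pos (mul_pos ha hb) (sq_pos_of_ne_zero (sub_ne_zero.mpr huv))]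

theorem strictMonoOn_div_one_sub :
    StrictMonoOn (fun t : ℝ => t / (1 - t)) (Iio 1) := by
  rintro u (hu : u < 1) v (hv : v < 1) huv
  rw [div_lt_div_iff₀ (by linarith) (by linarith)]
  nlinarith

theorem strictConvexOn_rpow_div_one_sub_rpow {γ : ℝ} (hγ : 1 < γ) :
    StrictConvexOn ℝ (Ico 0 1) fun x : ℝ => x ^ γ / (1 - x ^ γ) := by
  have hpow : StrictConvexOn ℝ (Ico 0 1) fun x : ℝ => x ^ γ :=
    (strictConvexOn_rpow hγ).subset Ico_subset_Ici_self (convex_Ico 0 1)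
  have himage : (fun x : ℝ => x ^ γ) '' Ico 0 1 ⊆ Iio 1 := by
    rintro _ ⟨x, ⟨hx₀, hx₁⟩, rfl⟩
    exact Real.rpow_lt_one hx₀ hx₁ (by linarith)
  have hconvex : Convex ℝ ((fun x : ℝ => x ^ γ) '' Ico 0 1) :=
    (isPreconnected_Ico.image _
      (Real.continuous_rpow_const (by linarith)).continuousOn).ordConnected.convex
  exact (strictConvexOn_div_one_sub.subset himage hconvex).comp hpow
    (strictMonoOn_div_one_sub.mono himage)
    ((Real.rpow_left_injOn (by linarith)).mono fun x hx => hx.1)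

theorem stmt_5_general (n : ℕ) (κ γ δ : ℝ) (hγ : 1 < γ) (hδ : 1 < δ)
    (c : Fin n → ℝ) :
    StrictConcaveOn ℝ {α : Fin n → ℝ | ∀ j, α j ∈ Set.Ico (0:ℝ) 1}
      (ALKY n κ γ δ c) := by
  have hbarrier : StrictConvexOn ℝ {α : Fin n → ℝ | ∀ j, α j ∈ Ico (0:ℝ) 1}
      fun α => ∑ j, α j ^ γ / (1 - α j ^ γ) :=
    (strictConvexOn_rpow_div_one_sub_rpow hγ).sum_apply
  have hlinear : ConcaveOn ℝ {α : Fin n → ℝ | ∀ j, α j ∈ Ico (0:ℝ) 1}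
      fun α => ∑ j, κ * α j * c j := by
    have hL : (fun α : Fin n → ℝ => ∑ j, κ * α j * c j)
        = ⇑(∑ j, (κ * c j) • LinearMap.proj j : (Fin n → ℝ) →ₗ[ℝ] ℝ) := by
      funext α
      simp [mul_right_comm]
    exact hL ▸ LinearMap.concaveOn _ hbarrier.1
  have hcongestion : ConvexOn ℝ {α : Fin n → ℝ | ∀ j, α j ∈ Ico (0:ℝ) 1}
      fun α => (∑ j, α j) ^ δ :=
    (convexOn_rpow hδ.le).comp_sum_apply.subset
      (fun α hα => Finset.sum_nonneg fun j _ => (hα j).1) hbarrier.1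
  have hsplit : ALKY n κ γ δ c = (fun α => ∑ j, κ * α j * c j)
      - (fun α => ∑ j, α j ^ γ / (1 - α j ^ γ)) - fun α => (∑ j, α j) ^ δ := by
    funext α
    simp [ALKY, Finset.sum_sub_distrib]
  rw [hsplit]
  exact (hlinear.sub_strictConvexOn hbarrier).sub_convexOn hcongestion

/-- For every n ≥ 1, parameters κ, γ, δ > 1 and c ∈ (0,∞)ⁿ, the ALKY utility
is strictly concave in α on [0,1)ⁿ. -/
theorem stmt_5 (n : ℕ) (hn : 1 ≤ n) (κ γ δ : ℝ) (hκ : 1 < κ) (hγ : 1 < γ) (hδ : 1 < δ)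
    (c : Fin n → ℝ) (hc : ∀ j, 0 < c j) :
    StrictConcaveOn ℝ {α : Fin n → ℝ | ∀ j, α j ∈ Set.Ico (0:ℝ) 1}
      (ALKY n κ γ δ c) :=
  stmt_5_general n κ γ δ hγ hδ c
end

section
/- Let N ≥ 2, κ, γ, δ > 1, and let α ∈ [0,1)^{n_N} be a weight list such that every individual has at least one strictly positive edge weight. Then there exists a unique compatibility list C̄ = (c̄_{ij})_{1≤i<j≤N} for which the gradient of the social objective O(·; C̄) vanishes at α; it is given explicitly by 2κ c̄_{ij} = 2γ α_{ij}^{γ−1}/(1 − α_{ij}^γ)² + δ (Σ_{k≠i} α_{ik})^{δ−1} + δ (Σ_{k≠j} α_{jk})^{δ−1}, every c̄_{ij} is strictly positive, and α is the unique solution of the Social Optimization Problem with compatibility list C̄. -/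
/-- ALKY utility of individual `i` given the compatibility matrix `c` and the
(symmetric) weight matrix `α`: sum over the other individuals j ≠ i. -/
noncomputable def Uind (N : ℕ) (κ γ δ : ℝ) (c : Fin N → Fin N → ℝ) (i : Fin N)
    (α : Fin N → Fin N → ℝ) : ℝ :=
  (∑ j ∈ Finset.univ.erase i, (κ * α i j * c i j - α i j ^ γ / (1 - α i j ^ γ)))
    - (∑ j ∈ Finset.univ.erase i, α i j) ^ δ

/-- The social objective: the sum of the individual utilities. -/
noncomputable def socialObj (N : ℕ) (κ γ δ : ℝ) (c : Fin N → Fin N → ℝ)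
    (α : Fin N → Fin N → ℝ) : ℝ :=
  ∑ i, Uind N κ γ δ c i α

/-- The feasible set of the Social Optimization Problem: symmetric weight
lists with zero diagonal, off-diagonal weights in [0,1), and no isolated
vertex (every individual has at least one strictly positive edge weight). -/
def WeightFeasible (N : ℕ) (α : Fin N → Fin N → ℝ) : Prop :=
  (∀ i j, α i j = α j i) ∧ (∀ i, α i i = 0) ∧
  (∀ i j, i ≠ j → α i j ∈ Set.Ico (0:ℝ) 1) ∧
  (∀ i, ∃ j, j ≠ i ∧ 0 < α i j)

/-- The weight matrix obtained from `α` by setting the (symmetric) weight of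
the edge {i,j} to `t`, keeping all other entries unchanged. -/
def upd {N : ℕ} (α : Fin N → Fin N → ℝ) (i j : Fin N) (t : ℝ) :
    Fin N → Fin N → ℝ :=
  fun k l => if (k = i ∧ l = j) ∨ (k = j ∧ l = i) then t else α k l

/-!
The edge penalty `x ↦ x^γ/(1-x^γ)` is strictly convex on `[0,1)` and `s ↦ s^δ` is convex on
`[0,∞)`, so every utility lies below its tangent plane at `α`, with a strictly positive gap on
every edge whose weight changes. The derivative of the objective along the edge `{i,j}` is
`κ (c_ij + c_ji)` minus a quantity depending only on `α`, so vanishing of the gradient pins down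
`c̄` uniquely. Summing the tangent-plane bounds over all individuals, each edge contributes its
directional derivative, which is zero at `c̄`; hence `O(β) < O(α)` for every feasible `β ≠ α`.
-/

open Finset

namespace Real

theorem rpow_add_mul_sub_le_rpow {p a b : ℝ} (hp : 1 ≤ p) (ha : 0 ≤ a) (hb : 0 ≤ b) :
    a ^ p + p * a ^ (p - 1) * (b - a) ≤ b ^ p := by
  rcases ha.eq_or_lt with rfl | ha
  · rcases hp.eq_or_lt with rfl | hp
    · simp
    · simp [zero_rpow (by linarith : p ≠ 0), zero_rpow (by linarith : p - 1 ≠ 0),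
        rpow_nonneg hb]
  · have bernoulli := one_add_mul_self_le_rpow_one_add (s := b / a - 1)
      (by linarith [div_nonneg hb ha.le]) hp
    rw [add_sub_cancel, div_rpow hb ha.le, le_div_iff₀ (rpow_pos_of_pos ha p)] at bernoulli
    calc a ^ p + p * a ^ (p - 1) * (b - a) = (1 + p * (b / a - 1)) * a ^ p := by
          rw [rpow_sub_one ha.ne']; field_simp
      _ ≤ b ^ p := bernoulli

end Real

theorem div_one_sub_add_lt_div_one_sub {u v : ℝ} (hu : u < 1) (hv : v < 1) (huv : u ≠ v) :
    u / (1 - u) + (v - u) / (1 - u) ^ 2 < v / (1 - v) := by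
  have hu' : 0 < 1 - u := by linarith
  have hv' : 0 < 1 - v := by linarith
  have key : v / (1 - v) - (u / (1 - u) + (v - u) / (1 - u) ^ 2)
      = (v - u) ^ 2 / ((1 - u) ^ 2 * (1 - v)) := by
    field_simp; ring
  have : 0 < (v - u) ^ 2 / ((1 - u) ^ 2 * (1 - v)) := by
    have := sub_ne_zero.2 huv.symm; positivity
  linarith

theorem HasDerivAt.sum_update {ι : Type*} [DecidableEq ι] {s : Finset ι} {j : ι} (hj : j ∈ s)
    (g : ι → ℝ → ℝ) (x : ι → ℝ) {g' : ℝ} (hg : HasDerivAt (g j) g' (x j)) :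
    HasDerivAt (fun t => ∑ l ∈ s, g l (Function.update x j t l)) g' (x j) := by
  have hterm : ∀ l ∈ s, HasDerivAt (fun t => g l (Function.update x j t l))
      (if l = j then g' else 0) (x j) := by
    intro l _
    by_cases hl : l = j
    · subst hl
      simpa only [Function.update_self, if_true] using hg
    · simpa only [Function.update_of_ne hl, hl, if_false] using hasDerivAt_const _ _
  simpa only [sum_ite_eq', hj, if_true] using HasDerivAt.fun_sum hterm

noncomputable def penalty (γ x : ℝ) : ℝ := x ^ γ / (1 - x ^ γ)

noncomputable def penaltyDeriv (γ x : ℝ) : ℝ := γ * x ^ (γ - 1) / (1 - x ^ γ) ^ 2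

noncomputable def penaltyGap (γ a b : ℝ) : ℝ :=
  penalty γ b - penalty γ a - penaltyDeriv γ a * (b - a)

theorem hasDerivAt_penalty {γ x : ℝ} (hγ : 1 ≤ γ) (hx : x ^ γ ≠ 1) :
    HasDerivAt (penalty γ) (penaltyDeriv γ x) x := by
  have hpow : HasDerivAt (fun t : ℝ => t ^ γ) (γ * x ^ (γ - 1)) x :=
    Real.hasDerivAt_rpow_const (Or.inr hγ)
  refine (hpow.div (hpow.const_sub 1) (sub_ne_zero.2 hx.symm)).congr_deriv ?_
  rw [penaltyDeriv]
  congr 1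
  ring

theorem penaltyGap_pos {γ a b : ℝ} (hγ : 1 ≤ γ) (ha : a ∈ Set.Ico (0 : ℝ) 1)
    (hb : b ∈ Set.Ico (0 : ℝ) 1) (hab : a ≠ b) : 0 < penaltyGap γ a b := by
  have hγ0 : γ ≠ 0 := by positivity
  have hu : a ^ γ < 1 := Real.rpow_lt_one ha.1 ha.2 (by positivity)
  have hv : b ^ γ < 1 := Real.rpow_lt_one hb.1 hb.2 (by positivity)
  have huv : a ^ γ ≠ b ^ γ := fun h => hab ((Real.rpow_left_inj ha.1 hb.1 hγ0).1 h)
  have hlin : γ * a ^ (γ - 1) * (b - a) / (1 - a ^ γ) ^ 2 ≤ (b ^ γ - a ^ γ) / (1 - a ^ γ) ^ 2 :=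
    div_le_div_of_nonneg_right (by linarith [Real.rpow_add_mul_sub_le_rpow hγ ha.1 hb.1])
      (sq_nonneg _)
  have := div_one_sub_add_lt_div_one_sub hu hv huv
  rw [penaltyGap, penalty, penalty, penaltyDeriv, div_mul_eq_mul_div]
  linarith

theorem penaltyGap_nonneg {γ a b : ℝ} (hγ : 1 ≤ γ) (ha : a ∈ Set.Ico (0 : ℝ) 1)
    (hb : b ∈ Set.Ico (0 : ℝ) 1) : 0 ≤ penaltyGap γ a b := by
  rcases eq_or_ne a b with rfl | hab
  · simp [penaltyGap]
  · exact (penaltyGap_pos hγ ha hb hab).le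

section Derivative

variable {N : ℕ} {κ γ δ : ℝ} {c α : Fin N → Fin N → ℝ} {i j : Fin N}

theorem upd_comm (α : Fin N → Fin N → ℝ) (i j : Fin N) (t : ℝ) : upd α i j t = upd α j i t := by
  funext k l
  simp only [upd, or_comm]

theorem upd_apply_left (hij : i ≠ j) (t : ℝ) (l : Fin N) :
    upd α i j t i l = Function.update (α i) j t l := by
  by_cases hl : l = j
  · subst hl
    simp [upd]
  · simp [upd, hl, hij]

theorem Uind_upd_of_ne {k : Fin N} (hki : k ≠ i) (hkj : k ≠ j) (t : ℝ) :
    Uind N κ γ δ c k (upd α i j t) = Uind N κ γ δ c k α := by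
  simp [Uind, upd, hki, hkj]

theorem hasDerivAt_Uind_upd (hγ : 1 ≤ γ) (hδ : 1 ≤ δ) (hij : i ≠ j) (ha : α i j ^ γ ≠ 1) :
    HasDerivAt (fun t => Uind N κ γ δ c i (upd α i j t))
      (κ * c i j - penaltyDeriv γ (α i j) - δ * (∑ k ∈ univ.erase i, α i k) ^ (δ - 1))
      (α i j) := by
  have hj : j ∈ univ.erase i := mem_erase.2 ⟨hij.symm, mem_univ j⟩
  have hedges := HasDerivAt.sum_update hj (fun l x => κ * x * c i l - penalty γ x) (α i)
    ((((hasDerivAt_id _).const_mul κ).mul_const (c i j)).sub (hasDerivAt_penalty hγ ha))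
  have hdegree := (HasDerivAt.sum_update hj (fun _ x => x) (α i) (hasDerivAt_id _)).rpow_const
    (p := δ) (Or.inr hδ)
  simp only [Function.update_eq_self] at hdegree
  simp only [Uind, upd_apply_left hij]
  exact (hedges.fun_sub hdegree).congr_deriv (by ring)

noncomputable def marginalCost (γ δ : ℝ) (α : Fin N → Fin N → ℝ) (i j : Fin N) : ℝ :=
  2 * γ * α i j ^ (γ - 1) / (1 - α i j ^ γ) ^ 2
    + δ * (∑ k ∈ univ.erase i, α i k) ^ (δ - 1) + δ * (∑ k ∈ univ.erase j, α j k) ^ (δ - 1)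

theorem socialObj_upd (hij : i ≠ j) (t : ℝ) :
    socialObj N κ γ δ c (upd α i j t) = Uind N κ γ δ c i (upd α i j t)
      + Uind N κ γ δ c j (upd α i j t) + ∑ k ∈ (univ.erase i).erase j, Uind N κ γ δ c k α := by
  rw [socialObj, ← add_sum_erase _ _ (mem_univ i),
    ← add_sum_erase _ _ (mem_erase.2 ⟨hij.symm, mem_univ j⟩), ← add_assoc]
  refine congrArg _ (sum_congr rfl fun k hk => ?_)
  obtain ⟨hkj, hk⟩ := mem_erase.1 hk
  exact Uind_upd_of_ne (mem_erase.1 hk).1 hkj t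

theorem hasDerivAt_socialObj_upd (hγ : 1 ≤ γ) (hδ : 1 ≤ δ) (hij : i ≠ j) (hα : α j i = α i j)
    (ha : α i j ^ γ ≠ 1) :
    HasDerivAt (fun t => socialObj N κ γ δ c (upd α i j t))
      (κ * (c i j + c j i) - marginalCost γ δ α i j) (α i j) := by
  have hi := hasDerivAt_Uind_upd (κ := κ) (c := c) hγ hδ hij ha
  have hj := hasDerivAt_Uind_upd (κ := κ) (c := c) hγ hδ hij.symm (hα ▸ ha)
  simp only [upd_comm α j i, hα] at hj
  simp only [socialObj_upd hij]
  refine ((hi.add hj).add_const _).congr_deriv ?_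
  rw [marginalCost, penaltyDeriv]
  ring

end Derivative

theorem sum_sum_erase_eq_zero_of_skew {ι : Type*} [Fintype ι] [DecidableEq ι] (P : ι → ι → ℝ)
    (hP : ∀ i j, i ≠ j → P i j + P j i = 0) : ∑ i, ∑ j ∈ univ.erase i, P i j = 0 := by
  have hswap : ∑ i, ∑ j ∈ univ.erase i, P i j = ∑ i, ∑ j ∈ univ.erase i, P j i :=
    sum_comm' fun i j => by simp [ne_comm]
  have hpairs : ∑ i, ∑ j ∈ univ.erase i, (P i j + P j i) = 0 :=
    sum_eq_zero fun i _ => sum_eq_zero fun j hj => hP i j (mem_erase.1 hj).1.symm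
  simp only [sum_add_distrib, ← hswap] at hpairs
  linarith

namespace WeightFeasible

variable {N : ℕ} {α : Fin N → Fin N → ℝ} {i j : Fin N}

theorem mem_Ico (hα : WeightFeasible N α) (hj : j ∈ univ.erase i) : α i j ∈ Set.Ico (0 : ℝ) 1 :=
  hα.2.2.1 i j (mem_erase.1 hj).1.symm

theorem sum_erase_nonneg (hα : WeightFeasible N α) (i : Fin N) :
    0 ≤ ∑ k ∈ univ.erase i, α i k :=
  sum_nonneg fun _ hk => (hα.mem_Ico hk).1

theorem sum_erase_pos (hα : WeightFeasible N α) (i : Fin N) : 0 < ∑ k ∈ univ.erase i, α i k := by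
  obtain ⟨j, hji, hpos⟩ := hα.2.2.2 i
  exact sum_pos' (fun _ hk => (hα.mem_Ico hk).1) ⟨j, mem_erase.2 ⟨hji, mem_univ j⟩, hpos⟩

end WeightFeasible

section Concavity

variable {N : ℕ} {κ γ δ : ℝ} {c α β : Fin N → Fin N → ℝ}

theorem Uind_add_sum_penaltyGap_le (hδ : 1 ≤ δ) (i : Fin N)
    (hα : 0 ≤ ∑ k ∈ univ.erase i, α i k) (hβ : 0 ≤ ∑ k ∈ univ.erase i, β i k) :
    Uind N κ γ δ c i β + ∑ j ∈ univ.erase i, penaltyGap γ (α i j) (β i j)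
      ≤ Uind N κ γ δ c i α + ∑ j ∈ univ.erase i, (κ * c i j - penaltyDeriv γ (α i j)
          - δ * (∑ k ∈ univ.erase i, α i k) ^ (δ - 1)) * (β i j - α i j) := by
  set s := univ.erase i
  have hdegree := Real.rpow_add_mul_sub_le_rpow hδ hα hβ
  have hlin : ∑ j ∈ s, (κ * c i j - penaltyDeriv γ (α i j)
        - δ * (∑ k ∈ s, α i k) ^ (δ - 1)) * (β i j - α i j)
      = ∑ j ∈ s, (κ * c i j - penaltyDeriv γ (α i j)) * (β i j - α i j)
        - δ * (∑ k ∈ s, α i k) ^ (δ - 1) * (∑ k ∈ s, β i k - ∑ k ∈ s, α i k) := by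
    rw [← sum_sub_distrib, mul_sum, ← sum_sub_distrib]
    exact sum_congr rfl fun j _ => by ring
  have hedges : ∑ j ∈ s, (κ * β i j * c i j - penalty γ (β i j))
        + ∑ j ∈ s, penaltyGap γ (α i j) (β i j)
      = ∑ j ∈ s, (κ * α i j * c i j - penalty γ (α i j))
        + ∑ j ∈ s, (κ * c i j - penaltyDeriv γ (α i j)) * (β i j - α i j) := by
    simp only [← sum_add_distrib, penaltyGap]
    exact sum_congr rfl fun j _ => by ring
  simp only [penalty] at hedges
  rw [hlin, Uind, Uind]
  linarith

theorem socialObj_lt_of_stationary (hγ : 1 ≤ γ) (hδ : 1 ≤ δ)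
    (hc : ∀ i j, i ≠ j → 2 * κ * c i j = marginalCost γ δ α i j)
    (hα : WeightFeasible N α) (hβ : WeightFeasible N β) (hne : β ≠ α) :
    socialObj N κ γ δ c β < socialObj N κ γ δ c α := by
  set P := fun i j => (κ * c i j - penaltyDeriv γ (α i j)
    - δ * (∑ k ∈ univ.erase i, α i k) ^ (δ - 1)) * (β i j - α i j) with hP
  -- `P i j + P j i` is `β i j - α i j` times the derivative of the objective along `{i,j}`.
  have hgradient : ∑ i, ∑ j ∈ univ.erase i, P i j = 0 := by
    refine sum_sum_erase_eq_zero_of_skew P fun i j hij => ?_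
    have hij' := hc i j hij
    have hji' := hc j i hij.symm
    simp only [hP, marginalCost, penaltyDeriv, hα.1 j i, hβ.1 j i] at hij' hji' ⊢
    linear_combination (β i j - α i j) / 2 * (hij' + hji')
  have hgap : 0 < ∑ i, ∑ j ∈ univ.erase i, penaltyGap γ (α i j) (β i j) := by
    obtain ⟨i, j, hij⟩ : ∃ i j, β i j ≠ α i j := by
      by_contra! h
      exact hne (funext₂ h)
    have hji : j ≠ i := fun h => hij (h ▸ (hβ.2.1 i).trans (hα.2.1 i).symm)
    have hj : j ∈ univ.erase i := mem_erase.2 ⟨hji, mem_univ j⟩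
    have hnonneg : ∀ i, ∀ j ∈ univ.erase i, 0 ≤ penaltyGap γ (α i j) (β i j) :=
      fun i _ hj => penaltyGap_nonneg hγ (hα.mem_Ico hj) (hβ.mem_Ico hj)
    exact sum_pos' (fun i _ => sum_nonneg (hnonneg i)) ⟨i, mem_univ i,
      sum_pos' (hnonneg i) ⟨j, hj, penaltyGap_pos hγ (hα.mem_Ico hj) (hβ.mem_Ico hj) hij.symm⟩⟩
  have hrows := sum_le_sum fun i (_ : i ∈ univ) =>
    Uind_add_sum_penaltyGap_le (κ := κ) (γ := γ) (c := c) hδ i (hα.sum_erase_nonneg i)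
      (hβ.sum_erase_nonneg i)
  rw [sum_add_distrib, sum_add_distrib, hgradient] at hrows
  rw [socialObj, socialObj]
  linarith

end Concavity

section Stationary

variable {N : ℕ} {κ γ δ : ℝ} {c α : Fin N → Fin N → ℝ} {i j : Fin N}

noncomputable def stationaryCompatibility (κ γ δ : ℝ) (α : Fin N → Fin N → ℝ) (i j : Fin N) : ℝ :=
  if i = j then 0 else marginalCost γ δ α i j / (2 * κ)

theorem stationaryCompatibility_self (i : Fin N) : stationaryCompatibility κ γ δ α i i = 0 :=
  if_pos rfl

theorem stationaryCompatibility_comm (hα : ∀ i j, α i j = α j i) (i j : Fin N) :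
    stationaryCompatibility κ γ δ α i j = stationaryCompatibility κ γ δ α j i := by
  rcases eq_or_ne i j with rfl | hij
  · rfl
  · rw [stationaryCompatibility, stationaryCompatibility, if_neg hij, if_neg hij.symm,
      marginalCost, marginalCost, hα i j]
    ring

theorem two_mul_stationaryCompatibility (hκ : κ ≠ 0) (hij : i ≠ j) :
    2 * κ * stationaryCompatibility κ γ δ α i j = marginalCost γ δ α i j := by
  rw [stationaryCompatibility, if_neg hij]
  field_simp

theorem eq_stationaryCompatibility (hκ : κ ≠ 0) (hc : ∀ i, c i i = 0)
    (h : ∀ i j, i ≠ j → 2 * κ * c i j = marginalCost γ δ α i j) :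
    c = stationaryCompatibility κ γ δ α := by
  funext i j
  rcases eq_or_ne i j with rfl | hij
  · rw [hc, stationaryCompatibility_self]
  · exact mul_left_cancel₀ (mul_ne_zero two_ne_zero hκ)
      ((h i j hij).trans (two_mul_stationaryCompatibility hκ hij).symm)

theorem stationaryCompatibility_pos (hκ : 0 < κ) (hγ : 0 ≤ γ) (hδ : 0 < δ)
    (hα : WeightFeasible N α) (hij : i ≠ j) : 0 < stationaryCompatibility κ γ δ α i j := by
  have hi := hα.sum_erase_pos i
  have hj := hα.sum_erase_pos j
  have hα0 := (hα.2.2.1 i j hij).1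
  rw [stationaryCompatibility, if_neg hij, marginalCost]
  positivity

end Stationary

theorem stmt_11_general (N : ℕ) (κ γ δ : ℝ) (hκ : 1 < κ) (hγ : 1 < γ) (hδ : 1 < δ)
    (α : Fin N → Fin N → ℝ) (hα : WeightFeasible N α) :
    ∃ cbar : Fin N → Fin N → ℝ,
      ((∀ i j, cbar i j = cbar j i) ∧ (∀ i, cbar i i = 0) ∧
        (∀ i j, i ≠ j →
          deriv (fun t => socialObj N κ γ δ cbar (upd α i j t)) (α i j) = 0)) ∧
      (∀ c : Fin N → Fin N → ℝ,
        ((∀ i j, c i j = c j i) ∧ (∀ i, c i i = 0) ∧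
          (∀ i j, i ≠ j →
            deriv (fun t => socialObj N κ γ δ c (upd α i j t)) (α i j) = 0)) →
        c = cbar) ∧
      (∀ i j, i ≠ j → 2 * κ * cbar i j =
        2 * γ * α i j ^ (γ - 1) / (1 - α i j ^ γ) ^ 2
          + δ * (∑ k ∈ Finset.univ.erase i, α i k) ^ (δ - 1)
          + δ * (∑ k ∈ Finset.univ.erase j, α j k) ^ (δ - 1)) ∧
      (∀ i j, i ≠ j → 0 < cbar i j) ∧
      (∀ β : Fin N → Fin N → ℝ, WeightFeasible N β → β ≠ α →
        socialObj N κ γ δ cbar β < socialObj N κ γ δ cbar α) := by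
  have hκ0 : κ ≠ 0 := by positivity
  have hderiv (c : Fin N → Fin N → ℝ) (i j : Fin N) (hij : i ≠ j) :
      deriv (fun t => socialObj N κ γ δ c (upd α i j t)) (α i j)
        = κ * (c i j + c j i) - marginalCost γ δ α i j := by
    have ha := hα.2.2.1 i j hij
    exact (hasDerivAt_socialObj_upd hγ.le hδ.le hij (hα.1 j i)
      (Real.rpow_lt_one ha.1 ha.2 (by positivity)).ne).deriv
  have hstationary (i j : Fin N) (hij : i ≠ j) :
      2 * κ * stationaryCompatibility κ γ δ α i j = marginalCost γ δ α i j :=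
    two_mul_stationaryCompatibility hκ0 hij
  refine ⟨stationaryCompatibility κ γ δ α,
    ⟨stationaryCompatibility_comm hα.1, stationaryCompatibility_self, fun i j hij => ?_⟩,
    fun c ⟨hcs, hcd, hc⟩ => eq_stationaryCompatibility hκ0 hcd fun i j hij => ?_, hstationary,
    fun i j hij => stationaryCompatibility_pos (by positivity) (by positivity) (by positivity) hα
      hij,
    fun β hβ hne => socialObj_lt_of_stationary hγ.le hδ.le hstationary hα hβ hne⟩
  · rw [hderiv _ i j hij]
    linear_combination hstationary i j hij + κ * stationaryCompatibility_comm hα.1 j i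
  · linear_combination (hderiv c i j hij).symm.trans (hc i j hij) + κ * hcs i j

/-- For N ≥ 2, κ, γ, δ > 1 and a feasible weight list α (no isolated vertex),
there exists a unique compatibility list C̄ at which the gradient of the
social objective vanishes at α; it is given by
2κ c̄_{ij} = 2γ α_{ij}^{γ−1}/(1−α_{ij}^γ)² + δ(Σ_{k≠i} α_{ik})^{δ−1}
+ δ(Σ_{k≠j} α_{jk})^{δ−1}, it is strictly positive, and α is the unique
solution of the Social Optimization Problem with compatibility list C̄. -/
theorem stmt_11 (N : ℕ) (hN : 2 ≤ N) (κ γ δ : ℝ) (hκ : 1 < κ) (hγ : 1 < γ) (hδ : 1 < δ)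
    (α : Fin N → Fin N → ℝ) (hα : WeightFeasible N α) :
    ∃ cbar : Fin N → Fin N → ℝ,
      ((∀ i j, cbar i j = cbar j i) ∧ (∀ i, cbar i i = 0) ∧
        (∀ i j, i ≠ j →
          deriv (fun t => socialObj N κ γ δ cbar (upd α i j t)) (α i j) = 0)) ∧
      (∀ c : Fin N → Fin N → ℝ,
        ((∀ i j, c i j = c j i) ∧ (∀ i, c i i = 0) ∧
          (∀ i j, i ≠ j →
            deriv (fun t => socialObj N κ γ δ c (upd α i j t)) (α i j) = 0)) →
        c = cbar) ∧
      (∀ i j, i ≠ j → 2 * κ * cbar i j =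
        2 * γ * α i j ^ (γ - 1) / (1 - α i j ^ γ) ^ 2
          + δ * (∑ k ∈ Finset.univ.erase i, α i k) ^ (δ - 1)
          + δ * (∑ k ∈ Finset.univ.erase j, α j k) ^ (δ - 1)) ∧
      (∀ i j, i ≠ j → 0 < cbar i j) ∧
      (∀ β : Fin N → Fin N → ℝ, WeightFeasible N β → β ≠ α →
        socialObj N κ γ δ cbar β < socialObj N κ γ δ cbar α) :=
  stmt_11_general N κ γ δ hκ hγ hδ α hα
end

section
/- Let N ≥ 2, κ, γ, δ > 1, and let (c_{ij})_{i≠j} be a symmetric family of positive reals (c_{ij} = c_{ji}) such that all the vectors C^i = (c_{ij})_{j≠i}, viewed as multisets (equivalently, each is a permutation of a common vector c̄ ∈ (0,∞)^{N−1}), coincide. For each i let (α^i)* ∈ [0,1)^{N−1} be the unique maximizer of the ALKY utility U(·; C^i). Then for all k ≠ m, the weight individual k assigns to individual m equals the weight individual m assigns to individual k: (α^k)*_m = (α^m)*_k. -/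
/-!
Relabelling the other individuals is a symmetry of the ALKY utility: permuting the
compatibility vector and the weight vector together leaves it unchanged. Since all
columns are permutations of `c̄`, the columns of `k` and `m` differ by such a relabelling,
and because `c k m = c m k` it can be chosen to send `m` to `k`. Uniqueness of the
maximizer then forces `(α^k)*` to be `(α^m)*` relabelled, and reading off the entry at
`m` gives the claim.
-/

/-- The ALKY utility function over an arbitrary finite index type, with
parameters κ, γ, δ and compatibility vector c, as a function of the weight
vector α. -/
noncomputable def ALKY' {ι : Type*} [Fintype ι] (κ γ δ : ℝ) (c : ι → ℝ)
    (α : ι → ℝ) : ℝ :=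
  (∑ j, (κ * α j * c j - α j ^ γ / (1 - α j ^ γ))) - (∑ j, α j) ^ δ

open Function Set

theorem exists_equiv_comp_eq_and_apply_eq {α β γ : Type*} {u : α → γ} {v : β → γ}
    (e : α ≃ β) (he : v ∘ e = u) {a : α} {b : β} (hab : v b = u a) :
    ∃ e' : α ≃ β, v ∘ e' = u ∧ e' a = b := by
  classical
  refine ⟨e.trans (Equiv.swap (e a) b), ?_, by simp⟩
  have hvb : v b = v (e a) := by rw [hab, ← he, comp_apply]
  have hswap : v ∘ Equiv.swap (e a) b = v := by
    rw [Equiv.comp_swap_eq_update, ← hvb, update_eq_self, hvb, update_eq_self]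
  rw [Equiv.coe_trans, ← comp_assoc, hswap, he]

section Reindex

variable {ι ι' : Type*} [Fintype ι] [Fintype ι'] (κ γ δ : ℝ)

theorem ALKY'_comp_equiv (c : ι' → ℝ) (e : ι ≃ ι') (α : ι' → ℝ) :
    ALKY' κ γ δ (c ∘ e) (α ∘ e) = ALKY' κ γ δ c α := by
  unfold ALKY'
  simp only [comp_apply, e.sum_comp (fun j => κ * α j * c j - α j ^ γ / (1 - α j ^ γ)),
    e.sum_comp α]

theorem comp_equiv_eq_of_forall_ALKY'_lt {c : ι → ℝ} {c' : ι' → ℝ} (e : ι ≃ ι')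
    (hc : c' ∘ e = c) {α : ι → ℝ} {α' : ι' → ℝ}
    (hα : ∀ j, α j ∈ Ico (0 : ℝ) 1) (hα' : ∀ j, α' j ∈ Ico (0 : ℝ) 1)
    (hmax : ∀ β : ι → ℝ, (∀ j, β j ∈ Ico (0 : ℝ) 1) → β ≠ α →
      ALKY' κ γ δ c β < ALKY' κ γ δ c α)
    (hmax' : ∀ β : ι' → ℝ, (∀ j, β j ∈ Ico (0 : ℝ) 1) → β ≠ α' →
      ALKY' κ γ δ c' β < ALKY' κ γ δ c' α') :
    α' ∘ e = α := by
  subst hc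
  by_contra hne
  have hlt : ALKY' κ γ δ c' α' < ALKY' κ γ δ (c' ∘ e) α := by
    simpa only [ALKY'_comp_equiv] using hmax (α' ∘ e) (fun j => hα' (e j)) hne
  have hne' : α ∘ e.symm ≠ α' := by
    rintro rfl
    exact hne (by simp [comp_assoc])
  have hlt' : ALKY' κ γ δ (c' ∘ e) α < ALKY' κ γ δ c' α' := by
    simpa [← ALKY'_comp_equiv κ γ δ c' e (α ∘ e.symm), comp_assoc] using
      hmax' (α ∘ e.symm) (fun j => hα (e.symm j)) hne'
  exact hlt.not_gt hlt'

end Reindex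

theorem stmt_14_general (N : ℕ) (κ γ δ : ℝ)
    (c : Fin N → Fin N → ℝ) (hcs : ∀ i j, c i j = c j i)
    (cbar : Fin (N - 1) → ℝ)
    (hperm : ∀ i : Fin N, ∃ e : {j : Fin N // j ≠ i} ≃ Fin (N - 1),
      ∀ j : {j : Fin N // j ≠ i}, c i j.val = cbar (e j))
    (αstar : (i : Fin N) → {j : Fin N // j ≠ i} → ℝ)
    (hmem : ∀ (i : Fin N) (j : {j : Fin N // j ≠ i}), αstar i j ∈ Set.Ico (0:ℝ) 1)
    (hmax : ∀ i : Fin N, ∀ β : {j : Fin N // j ≠ i} → ℝ,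
      (∀ j, β j ∈ Set.Ico (0:ℝ) 1) → β ≠ αstar i →
      ALKY' κ γ δ (fun j : {j : Fin N // j ≠ i} => c i j.val) β <
        ALKY' κ γ δ (fun j : {j : Fin N // j ≠ i} => c i j.val) (αstar i)) :
    ∀ (k m : Fin N) (h : k ≠ m), αstar k ⟨m, h.symm⟩ = αstar m ⟨k, h⟩ := by
  intro k m h
  obtain ⟨ek, hek⟩ := hperm k
  obtain ⟨em, hem⟩ := hperm m
  have hcol : (fun j : {j // j ≠ m} => c m j) ∘ ek.trans em.symm = fun j : {j // j ≠ k} => c k j := by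
    funext j
    simp [hem, hek]
  obtain ⟨e, hce, hemk⟩ := exists_equiv_comp_eq_and_apply_eq _ hcol
    (a := ⟨m, h.symm⟩) (b := ⟨k, h⟩) (hcs m k)
  have hα := comp_equiv_eq_of_forall_ALKY'_lt κ γ δ e hce (hmem k) (hmem m) (hmax k) (hmax m)
  rw [← hα, comp_apply, hemk]

/-- Invisible-hand symmetry: if all the compatibility "columns"
C^i = (c_{ij})_{j≠i} are permutations of a common vector c̄, and (α^i)* is the
unique maximizer of the ALKY utility U(·; C^i) on [0,1)^{N−1}, then for all
k ≠ m the weight that k assigns to m equals the weight m assigns to k. -/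
theorem stmt_14 (N : ℕ) (hN : 2 ≤ N) (κ γ δ : ℝ) (hκ : 1 < κ) (hγ : 1 < γ) (hδ : 1 < δ)
    (c : Fin N → Fin N → ℝ) (hcs : ∀ i j, c i j = c j i)
    (hcpos : ∀ i j, i ≠ j → 0 < c i j)
    (cbar : Fin (N - 1) → ℝ)
    (hperm : ∀ i : Fin N, ∃ e : {j : Fin N // j ≠ i} ≃ Fin (N - 1),
      ∀ j : {j : Fin N // j ≠ i}, c i j.val = cbar (e j))
    (αstar : (i : Fin N) → {j : Fin N // j ≠ i} → ℝ)
    (hmem : ∀ (i : Fin N) (j : {j : Fin N // j ≠ i}), αstar i j ∈ Set.Ico (0:ℝ) 1)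
    (hmax : ∀ i : Fin N, ∀ β : {j : Fin N // j ≠ i} → ℝ,
      (∀ j, β j ∈ Set.Ico (0:ℝ) 1) → β ≠ αstar i →
      ALKY' κ γ δ (fun j : {j : Fin N // j ≠ i} => c i j.val) β <
        ALKY' κ γ δ (fun j : {j : Fin N // j ≠ i} => c i j.val) (αstar i)) :
    ∀ (k m : Fin N) (h : k ≠ m), αstar k ⟨m, h.symm⟩ = αstar m ⟨k, h⟩ :=
  stmt_14_general N κ γ δ c hcs cbar hperm αstar hmem hmax
end
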